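/- The constant π/3 in the inequality |Ω| ≥ (π/3) r_in(Ω)² diam(Ω) for convex bodies in ℝ³ is sharp: for fixed r > 0, letting Ω_d be the interior of the convex hull of the ball B(0, r) and the points (0,0,±d/2), one has |Ω_d| / (r_in(Ω_d)² · diam(Ω_d)) → π/3 as d → ∞. -/

import Mathlib

open MeasureTheory Filter

/-- Inradius of a set `Ω ⊂ ℝ³`. -/
noncomputable def inradius (Ω : Set (EuclideanSpace ℝ (Fin 3))) : ℝ :=
  sSup {r : ℝ | 0 < r ∧ ∃ z, Metric.ball z r ⊆ Ω}

/-- The spindle-shaped convex body: interior of the convex hull of the closed ball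
of radius `r` centered at the origin and the two points `(0,0,±d/2)`. -/
noncomputable def spindle (r d : ℝ) : Set (EuclideanSpace ℝ (Fin 3)) :=
  interior (convexHull ℝ (Metric.closedBall 0 r ∪
    {EuclideanSpace.single 2 (d / 2), EuclideanSpace.single 2 (-(d / 2))}))

/-!
The hull `K` of the ball and the poles `±(d/2) e₃` is squeezed between two double cones with
apexes at the poles: the one over the equatorial disc of radius `r` lies in `K`, and `K` lies in
the one over the disc of radius `r d / (d - 2r)`, which contains the ball. Slicing horizontally, a
double cone of base radius `R` and height `d` has volume `π R² d / 3`, hence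
`π r² d / 3 ≤ |Ω_d| ≤ π r² d / 3 · (d / (d - 2r))²`. Moreover `K` contains the ball and lies in the
solid cylinder of radius `r` around the axis, so `r_in(Ω_d) = r`, and `diam Ω_d = d` is realised
by the poles.
-/

open Metric Set Real Topology

namespace EuclideanSpace

variable {n : ℕ}

noncomputable def dropLast : EuclideanSpace ℝ (Fin (n + 1)) →L[ℝ] EuclideanSpace ℝ (Fin n) :=
  LinearMap.toContinuousLinearMap
    { toFun := fun x => WithLp.toLp 2 fun i => x i.castSucc
      map_add' := fun _ _ => rfl
      map_smul' := fun _ _ => rfl }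

@[simp]
lemma dropLast_apply (x : EuclideanSpace ℝ (Fin (n + 1))) (i : Fin n) :
    dropLast x i = x i.castSucc := rfl

@[simp]
lemma dropLast_single_last (t : ℝ) : dropLast (single (Fin.last n) t) = 0 := by
  ext i; simp [(Fin.castSucc_lt_last i).ne]

@[simp]
lemma dropLast_single_castSucc (i : Fin n) (t : ℝ) :
    dropLast (single i.castSucc t) = single i t := by
  ext j; simp [PiLp.single_apply]

lemma norm_sq_eq_norm_dropLast_sq_add (x : EuclideanSpace ℝ (Fin (n + 1))) :
    ‖x‖ ^ 2 = ‖dropLast x‖ ^ 2 + x (Fin.last n) ^ 2 := by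
  simp [EuclideanSpace.norm_sq_eq, Fin.sum_univ_castSucc]

lemma norm_sub_single_last (x : EuclideanSpace ℝ (Fin (n + 1))) :
    ‖x - single (Fin.last n) (x (Fin.last n))‖ = ‖dropLast x‖ := by
  have h := norm_sq_eq_norm_dropLast_sq_add (x - single (Fin.last n) (x (Fin.last n)))
  simp only [map_sub, dropLast_single_last, sub_zero, PiLp.sub_apply, PiLp.single_apply,
    if_true, sub_self, ne_eq, OfNat.ofNat_ne_zero, not_false_eq_true, zero_pow, add_zero] at h
  exact (pow_left_inj₀ (norm_nonneg _) (norm_nonneg _) two_ne_zero).1 h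

lemma measurePreserving_last_dropLast :
    MeasurePreserving
      (fun x : EuclideanSpace ℝ (Fin (n + 1)) => (x (Fin.last n), dropLast x)) := by
  have h := ((MeasurePreserving.id (volume : Measure ℝ)).prod
    (PiLp.volume_preserving_toLp (Fin n))).comp
      ((volume_preserving_piFinSuccAbove (fun _ : Fin (n + 1) => ℝ) (Fin.last n)).comp
        (PiLp.volume_preserving_ofLp (Fin (n + 1))))
  rw [← Measure.volume_eq_prod] at h
  convert h using 1
  ext <;> simp [Fin.init]

lemma volume_preimage_last_dropLast {S : Set (ℝ × EuclideanSpace ℝ (Fin n))}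
    (hS : MeasurableSet S) :
    volume ((fun x : EuclideanSpace ℝ (Fin (n + 1)) => (x (Fin.last n), dropLast x)) ⁻¹' S) =
      ∫⁻ z, volume (Prod.mk z ⁻¹' S) := by
  rw [measurePreserving_last_dropLast.measure_preimage hS.nullMeasurableSet,
    Measure.volume_eq_prod, Measure.prod_apply hS]

lemma volume_ball_eq_ofReal_pow_mul [NeZero n] (x : EuclideanSpace ℝ (Fin n)) (t : ℝ) :
    volume (ball x t) =
      ENNReal.ofReal t ^ n * volume (ball (0 : EuclideanSpace ℝ (Fin n)) 1) := by
  simp only [volume_ball, Fintype.card_fin, ENNReal.ofReal_one, one_pow, one_mul]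

lemma volume_ball_fin_two_zero_one :
    volume (ball (0 : EuclideanSpace ℝ (Fin 2)) 1) = ENNReal.ofReal π := by
  simp

end EuclideanSpace

open EuclideanSpace

lemma integral_Ioi_max_sub_mul_pow (n : ℕ) [NeZero n] {c : ℝ} (hc : 0 < c) {R : ℝ}
    (hR : 0 ≤ R) :
    ∫ t in Ioi 0, max (R - c * t) 0 ^ n = R ^ (n + 1) / ((n + 1) * c) := by
  have hvanish : ∀ t ∈ Ioi 0 \ Ioc 0 (R / c), max (R - c * t) 0 ^ n = 0 := by
    rintro t ⟨ht0, ht⟩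
    have : R < c * t := (div_lt_iff₀' hc).1 (not_le.1 fun h => ht ⟨ht0, h⟩)
    simp [max_eq_right (by linarith : R - c * t ≤ 0), NeZero.ne]
  have hpos : ∀ t ∈ Ioc 0 (R / c), max (R - c * t) 0 ^ n = (R - c * t) ^ n := fun t ht => by
    rw [max_eq_left (by linarith [(le_div_iff₀' hc).1 ht.2])]
  rw [setIntegral_eq_of_subset_of_forall_sdiff_eq_zero measurableSet_Ioi Ioc_subset_Ioi_self
      hvanish, setIntegral_congr_fun measurableSet_Ioc hpos,
    ← intervalIntegral.integral_of_le (by positivity),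
    intervalIntegral.integral_comp_sub_mul (fun u => u ^ n) hc.ne', integral_pow,
    mul_div_cancel₀ R hc.ne', sub_self, zero_pow n.succ_ne_zero, sub_zero, mul_zero, sub_zero,
    smul_eq_mul]
  field_simp

lemma lintegral_ofReal_sub_mul_abs_pow (n : ℕ) [NeZero n] {c : ℝ} (hc : 0 < c) {R : ℝ}
    (hR : 0 ≤ R) :
    ∫⁻ z : ℝ, ENNReal.ofReal (R - c * |z|) ^ n =
      ENNReal.ofReal (2 * R ^ (n + 1) / ((n + 1) * c)) := by
  set g : ℝ → ℝ := fun t => max (R - c * t) 0 ^ n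
  have hsupp : HasCompactSupport fun z => g |z| := by
    refine HasCompactSupport.intro (isCompact_Icc (a := -(R / c)) (b := R / c)) fun z hz => ?_
    have : R < c * |z| := (div_lt_iff₀' hc).1 (not_le.1 fun h => hz (abs_le.1 h))
    simp [g, max_eq_right (by linarith : R - c * |z| ≤ 0), NeZero.ne]
  have hint : Integrable fun z => g |z| :=
    (by fun_prop : Continuous fun z => g |z|).integrable_of_hasCompactSupport hsupp
  calc ∫⁻ z : ℝ, ENNReal.ofReal (R - c * |z|) ^ n = ∫⁻ z, ENNReal.ofReal (g |z|) := by
        congr with z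
        rw [ENNReal.ofReal_pow (le_max_right _ _), ENNReal.ofReal_max, ENNReal.ofReal_zero,
          max_zero]
    _ = ENNReal.ofReal (∫ z, g |z|) := (ofReal_integral_eq_lintegral_ofReal hint
          (Eventually.of_forall fun z => pow_nonneg (le_max_right _ _) n)).symm
    _ = _ := by rw [integral_comp_abs, integral_Ioi_max_sub_mul_pow n hc hR, mul_div_assoc]

section DoubleCone

variable {n : ℕ}

-- Apexes `±(R / c) e_last`, equatorial section the ball of radius `R`.
def openDoubleCone (c R : ℝ) : Set (EuclideanSpace ℝ (Fin (n + 1))) :=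
  {x | ‖dropLast x‖ + c * |x (Fin.last n)| < R}

def closedDoubleCone (c R : ℝ) : Set (EuclideanSpace ℝ (Fin (n + 1))) :=
  {x | ‖dropLast x‖ + c * |x (Fin.last n)| ≤ R}

lemma lintegral_volume_ball_sub_mul_abs [NeZero n] {c : ℝ} (hc : 0 < c) {R : ℝ} (hR : 0 ≤ R) :
    ∫⁻ z : ℝ, volume (ball (0 : EuclideanSpace ℝ (Fin n)) (R - c * |z|)) =
      volume (ball (0 : EuclideanSpace ℝ (Fin n)) 1) *
        ENNReal.ofReal (2 * R ^ (n + 1) / ((n + 1) * c)) := by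
  simp_rw [volume_ball_eq_ofReal_pow_mul (0 : EuclideanSpace ℝ (Fin n)) (R - _)]
  rw [lintegral_mul_const _ (by fun_prop), lintegral_ofReal_sub_mul_abs_pow n hc hR, mul_comm]

lemma volume_openDoubleCone [NeZero n] {c : ℝ} (hc : 0 < c) {R : ℝ} (hR : 0 ≤ R) :
    volume (openDoubleCone (n := n) c R) = volume (ball (0 : EuclideanSpace ℝ (Fin n)) 1) *
      ENNReal.ofReal (2 * R ^ (n + 1) / ((n + 1) * c)) := by
  have hS : MeasurableSet {p : ℝ × EuclideanSpace ℝ (Fin n) | ‖p.2‖ + c * |p.1| < R} :=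
    measurableSet_lt (by fun_prop) measurable_const
  have hslice (z : ℝ) :
      Prod.mk z ⁻¹' {p : ℝ × EuclideanSpace ℝ (Fin n) | ‖p.2‖ + c * |p.1| < R} =
        ball 0 (R - c * |z|) := by
    ext v; simp [lt_sub_iff_add_lt]
  rw [← lintegral_volume_ball_sub_mul_abs hc hR]
  simp_rw [← hslice]
  exact volume_preimage_last_dropLast hS

lemma volume_closedDoubleCone [NeZero n] {c : ℝ} (hc : 0 < c) {R : ℝ} (hR : 0 ≤ R) :
    volume (closedDoubleCone (n := n) c R) = volume (ball (0 : EuclideanSpace ℝ (Fin n)) 1) *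
      ENNReal.ofReal (2 * R ^ (n + 1) / ((n + 1) * c)) := by
  have hS : MeasurableSet {p : ℝ × EuclideanSpace ℝ (Fin n) | ‖p.2‖ + c * |p.1| ≤ R} :=
    measurableSet_le (by fun_prop) measurable_const
  have hslice (z : ℝ) :
      Prod.mk z ⁻¹' {p : ℝ × EuclideanSpace ℝ (Fin n) | ‖p.2‖ + c * |p.1| ≤ R} =
        closedBall 0 (R - c * |z|) := by
    ext v; simp [le_sub_iff_add_le]
  rw [← lintegral_volume_ball_sub_mul_abs hc hR]
  simp_rw [← Measure.addHaar_closedBall_eq_addHaar_ball, ← hslice]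
  exact volume_preimage_last_dropLast hS

lemma isOpen_openDoubleCone (c R : ℝ) : IsOpen (openDoubleCone (n := n) c R) :=
  isOpen_lt (by fun_prop) continuous_const

lemma convex_closedDoubleCone {c : ℝ} (hc : 0 ≤ c) (R : ℝ) :
    Convex ℝ (closedDoubleCone (n := n) c R) := by
  have hf : ConvexOn ℝ univ fun x : EuclideanSpace ℝ (Fin (n + 1)) =>
      ‖dropLast x‖ + c * |x (Fin.last n)| :=
    ((convexOn_norm convex_univ).comp_linearMap dropLast.toLinearMap).add
      (((convexOn_norm convex_univ).comp_linearMap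
        (proj (Fin.last n) : EuclideanSpace ℝ (Fin (n + 1)) →L[ℝ] ℝ).toLinearMap).smul hc)
  simpa [closedDoubleCone] using hf.convex_le R

lemma closedBall_subset_closedDoubleCone {r c R : ℝ} (hR : 0 ≤ R)
    (h : r ^ 2 * (1 + c ^ 2) ≤ R ^ 2) :
    closedBall (0 : EuclideanSpace ℝ (Fin (n + 1))) r ⊆ closedDoubleCone c R := by
  intro x hx
  have hx' : ‖dropLast x‖ ^ 2 + |x (Fin.last n)| ^ 2 ≤ r ^ 2 := by
    rw [sq_abs, ← norm_sq_eq_norm_dropLast_sq_add]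
    exact pow_le_pow_left₀ (norm_nonneg x) (mem_closedBall_zero_iff.1 hx) 2
  -- Cauchy–Schwarz in `ℝ²`
  have hcs : (‖dropLast x‖ + c * |x (Fin.last n)|) ^ 2 ≤
      (1 + c ^ 2) * (‖dropLast x‖ ^ 2 + |x (Fin.last n)| ^ 2) := by
    nlinarith [sq_nonneg (c * ‖dropLast x‖ - |x (Fin.last n)|)]
  exact (abs_le_of_sq_le_sq' (by nlinarith) hR).2

lemma single_last_mem_closedDoubleCone {c R t : ℝ} (h : c * |t| ≤ R) :
    single (Fin.last n) t ∈ closedDoubleCone c R := by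
  simpa [closedDoubleCone] using h

lemma le_of_ball_subset_closedDoubleCone_zero [NeZero n] {z : EuclideanSpace ℝ (Fin (n + 1))}
    {ρ r : ℝ} (hr : 0 ≤ r) (h : ball z ρ ⊆ closedDoubleCone 0 r) : ρ ≤ r := by
  refine le_of_forall_lt_imp_le_of_dense fun t ht => ?_
  rcases le_or_gt t 0 with ht0 | ht0
  · linarith
  set u : EuclideanSpace ℝ (Fin (n + 1)) := single (Fin.castSucc 0) 1
  have hdu : ‖dropLast u‖ = 1 := by rw [dropLast_single_castSucc]; simp
  have hside (s : ℝ) (hs : |s| < ρ) : ‖dropLast z + s • dropLast u‖ ≤ r := by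
    have : z + s • u ∈ ball z ρ := by simpa [u, norm_smul] using hs
    simpa [closedDoubleCone] using h this
  have h2t : ‖(dropLast z + t • dropLast u) - (dropLast z + (-t) • dropLast u)‖ = 2 * t := by
    rw [add_sub_add_left_eq_sub, ← sub_smul, norm_smul, hdu, Real.norm_of_nonneg (by linarith)]
    ring
  have := norm_sub_le (dropLast z + t • dropLast u) (dropLast z + (-t) • dropLast u)
  linarith [hside t (by rwa [abs_of_pos ht0]), hside (-t) (by rwa [abs_neg, abs_of_pos ht0])]

end DoubleCone

section SpindleHull

variable {n : ℕ}

def spindleHull (n : ℕ) (r d : ℝ) : Set (EuclideanSpace ℝ (Fin (n + 1))) :=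
  convexHull ℝ (closedBall 0 r ∪ {single (Fin.last n) (d / 2), single (Fin.last n) (-(d / 2))})

lemma spindleHull_subset_closedDoubleCone {r d c R : ℝ} (hc : 0 ≤ c) (hR : 0 ≤ R)
    (hball : r ^ 2 * (1 + c ^ 2) ≤ R ^ 2) (hpole : c * |d / 2| ≤ R) :
    spindleHull n r d ⊆ closedDoubleCone c R := by
  refine convexHull_min (union_subset (closedBall_subset_closedDoubleCone hR hball) ?_)
    (convex_closedDoubleCone hc R)
  rintro x (rfl | rfl)
  · exact single_last_mem_closedDoubleCone hpole
  · exact single_last_mem_closedDoubleCone (by rwa [abs_neg])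

lemma openDoubleCone_subset_spindleHull {r d : ℝ} (hr : 0 < r) (hd : 0 < d) :
    openDoubleCone (2 * r / d) r ⊆ spindleHull n r d := by
  intro x hx
  set z := x (Fin.last n)
  set v := x - single (Fin.last n) z
  set t := 2 * |z| / d
  have hv : ‖v‖ < r * (1 - t) := by
    have : ‖v‖ + 2 * r / d * |z| < r := by rw [norm_sub_single_last]; exact hx
    linarith [show 2 * r / d * |z| = r * t by ring]
  have ht0 : 0 ≤ t := by positivity
  have ht1 : 0 < 1 - t := pos_of_mul_pos_right ((norm_nonneg v).trans_lt hv) hr.le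
  obtain ⟨s, hs, hts⟩ : ∃ s ∈ ({d / 2, -(d / 2)} : Set ℝ), t * s = z := by
    rcases le_total 0 z with hz | hz
    · exact ⟨d / 2, Or.inl rfl, by simp only [t, abs_of_nonneg hz]; field_simp⟩
    · exact ⟨-(d / 2), Or.inr rfl, by simp only [t, abs_of_nonpos hz]; field_simp⟩
  have hb : (1 - t)⁻¹ • v ∈ closedBall 0 r := by
    rw [mem_closedBall_zero_iff, norm_smul, norm_inv, Real.norm_of_nonneg ht1.le,
      inv_mul_le_iff₀ ht1, mul_comm]
    exact hv.le
  have hp : single (Fin.last n) s ∈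
      ({single (Fin.last n) (d / 2), single (Fin.last n) (-(d / 2))} : Set _) := by
    rcases hs with rfl | rfl <;> simp
  have hx : (1 - t) • (1 - t)⁻¹ • v + t • single (Fin.last n) s = x := by
    rw [smul_inv_smul₀ ht1.ne']
    ext j
    by_cases hj : j = Fin.last n <;> simp [v, hj, hts, z]
  exact segment_subset_convexHull (mem_union_left _ hb) (mem_union_right _ hp)
    ⟨1 - t, t, ht1.le, ht0, by ring, hx⟩

lemma ball_subset_interior_spindleHull (r d : ℝ) :
    ball 0 r ⊆ interior (spindleHull n r d) :=
  ball_subset_interior_closedBall.trans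
    (interior_mono (subset_union_left.trans (subset_convexHull ℝ _)))

lemma diam_interior_spindleHull {r d : ℝ} (hr : 0 < r) (hrd : 2 * r ≤ d) :
    diam (interior (spindleHull n r d)) = d := by
  have hne : (interior (spindleHull n r d)).Nonempty :=
    ⟨0, ball_subset_interior_spindleHull r d (mem_ball_self hr)⟩
  have hpoles : ({single (Fin.last n) (d / 2), single (Fin.last n) (-(d / 2))} : Set _) ⊆
      closedBall (0 : EuclideanSpace ℝ (Fin (n + 1))) (d / 2) := by
    rintro x (rfl | rfl) <;> simp [abs_of_nonneg (by linarith : 0 ≤ d)]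
  have hsub : closedBall 0 r ∪ {single (Fin.last n) (d / 2), single (Fin.last n) (-(d / 2))} ⊆
      closedBall (0 : EuclideanSpace ℝ (Fin (n + 1))) (d / 2) :=
    union_subset (closedBall_subset_closedBall (by linarith)) hpoles
  rw [← diam_closure, spindleHull,
    (convex_convexHull ℝ _).closure_interior_eq_closure_of_nonempty_interior hne, diam_closure,
    convexHull_diam]
  refine le_antisymm ?_ ?_
  · calc _ ≤ diam (closedBall (0 : EuclideanSpace ℝ (Fin (n + 1))) (d / 2)) :=
          diam_mono hsub isBounded_closedBall
      _ ≤ 2 * (d / 2) := diam_closedBall (by linarith)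
      _ = d := by ring
  · calc d = dist (single (Fin.last n) (d / 2)) (single (Fin.last n) (-(d / 2))) := by
          rw [PiLp.dist_single_same, Real.dist_eq, sub_neg_eq_add, add_halves,
            abs_of_nonneg (by linarith)]
      _ ≤ _ := dist_le_diam_of_mem (isBounded_closedBall.subset hsub)
          (mem_union_right _ (by simp)) (mem_union_right _ (by simp))

end SpindleHull

lemma inradius_spindle {r : ℝ} (hr : 0 < r) (d : ℝ) : inradius (spindle r d) = r := by
  refine IsGreatest.csSup_eq ⟨⟨hr, 0, ball_subset_interior_spindleHull r d⟩, ?_⟩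
  rintro ρ ⟨-, z, hz⟩
  have hcyl : spindle r d ⊆ closedDoubleCone 0 r := interior_subset.trans
    (spindleHull_subset_closedDoubleCone le_rfl hr.le (by simp) (by simpa using hr.le))
  exact le_of_ball_subset_closedDoubleCone_zero hr.le (hz.trans hcyl)

lemma diam_spindle {r d : ℝ} (hr : 0 < r) (hrd : 2 * r ≤ d) : diam (spindle r d) = d :=
  diam_interior_spindleHull hr hrd

lemma ofReal_le_volume_spindle {r d : ℝ} (hr : 0 < r) (hd : 0 < d) :
    ENNReal.ofReal (π / 3 * r ^ 2 * d) ≤ volume (spindle r d) := by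
  calc ENNReal.ofReal (π / 3 * r ^ 2 * d) = volume (openDoubleCone (n := 2) (2 * r / d) r) := by
        rw [volume_openDoubleCone (by positivity) hr.le, volume_ball_fin_two_zero_one,
          ← ENNReal.ofReal_mul pi_nonneg]
        congr 1
        field_simp
        ring
    _ ≤ volume (spindle r d) := measure_mono (interior_maximal
        (openDoubleCone_subset_spindleHull hr hd) (isOpen_openDoubleCone _ _))

lemma volume_spindle_le {r d : ℝ} (hr : 0 < r) (hrd : 2 * r < d) :
    volume (spindle r d) ≤ ENNReal.ofReal (π / 3 * r ^ 2 * d * (d / (d - 2 * r)) ^ 2) := by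
  have hd : 0 < d := by linarith
  have hd' : 0 < d - 2 * r := by linarith
  -- a convenient radius, slightly above the tangent one `r d / √(d² - 4r²)`
  set R := r * d / (d - 2 * r)
  have hR : 0 < R := by positivity
  have hball : r ^ 2 * (1 + (2 * R / d) ^ 2) ≤ R ^ 2 := by
    have h2R : 2 * R / d = 2 * r / (d - 2 * r) := by simp only [R]; field_simp
    rw [h2R, div_pow, div_pow, mul_pow, one_add_div (by positivity), mul_div_assoc',
      div_le_div_iff_of_pos_right (by positivity)]
    nlinarith [mul_pos (pow_pos hr 3) hd']
  have hpole : 2 * R / d * |d / 2| ≤ R := by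
    rw [abs_of_pos (by positivity)]; field_simp; rfl
  calc volume (spindle r d) ≤ volume (closedDoubleCone (n := 2) (2 * R / d) R) :=
        measure_mono (interior_subset.trans
          (spindleHull_subset_closedDoubleCone (by positivity) hR.le hball hpole))
    _ = ENNReal.ofReal (π / 3 * R ^ 2 * d) := by
        rw [volume_closedDoubleCone (by positivity) hR.le, volume_ball_fin_two_zero_one,
          ← ENNReal.ofReal_mul pi_nonneg]
        congr 1
        field_simp
        ring
    _ = _ := by simp only [R]; ring_nf

lemma spindle_ratio_mem_Icc {r d : ℝ} (hr : 0 < r) (hrd : 2 * r < d) :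
    (volume (spindle r d)).toReal / (inradius (spindle r d) ^ 2 * diam (spindle r d)) ∈
      Icc (π / 3) (π / 3 * (d / (d - 2 * r)) ^ 2) := by
  have hd : 0 < d := by linarith
  have hupper := volume_spindle_le hr hrd
  have hlower := (ENNReal.ofReal_le_iff_le_toReal
    (ne_top_of_le_ne_top ENNReal.ofReal_ne_top hupper)).1 (ofReal_le_volume_spindle hr hd)
  rw [inradius_spindle hr, diam_spindle hr hrd.le, mem_Icc, le_div_iff₀ (by positivity),
    div_le_iff₀ (by positivity)]
  exact ⟨by linarith, by linarith [ENNReal.toReal_le_of_le_ofReal (by positivity) hupper]⟩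

lemma tendsto_div_sub_const_atTop (a : ℝ) :
    Tendsto (fun d : ℝ => d / (d - a)) atTop (𝓝 1) := by
  have h : Tendsto (fun d : ℝ => 1 + a / (d - a)) atTop (𝓝 (1 + 0)) :=
    tendsto_const_nhds.add
      (tendsto_const_nhds.div_atTop (tendsto_atTop_add_const_right _ (-a) tendsto_id))
  rw [add_zero] at h
  refine h.congr' ?_
  filter_upwards [eventually_gt_atTop a] with d hd
  field_simp [sub_ne_zero.2 hd.ne']
  ring

/-- The constant `π/3` in `|Ω| ≥ (π/3) r_in(Ω)² diam(Ω)` is sharp: for fixed `r > 0`,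
`|Ω_d| / (r_in(Ω_d)² · diam(Ω_d)) → π/3` as `d → ∞`. -/
theorem spindle_ratio_tendsto_pi_div_three (r : ℝ) (hr : 0 < r) :
    Tendsto (fun d : ℝ =>
        (volume (spindle r d)).toReal /
          (inradius (spindle r d) ^ 2 * Metric.diam (spindle r d)))
      atTop (nhds (Real.pi / 3)) := by
  have hupper : Tendsto (fun d : ℝ => π / 3 * (d / (d - 2 * r)) ^ 2) atTop (𝓝 (π / 3)) := by
    simpa using ((tendsto_div_sub_const_atTop (2 * r)).pow 2).const_mul (π / 3)
  refine tendsto_of_tendsto_of_tendsto_of_le_of_le' tendsto_const_nhds hupper ?_ ?_ <;>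
    filter_upwards [eventually_gt_atTop (2 * r)] with d hd
  exacts [(spindle_ratio_mem_Icc hr hd).1, (spindle_ratio_mem_Icc hr hd).2]
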